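/- Let f, h ∈ L²((0,1)ⁿ) with Cov(f,h) ≥ 0, and g = f + h. Then S^g_{T,x_i} ≤ 2·max{S^f_{T,x_i}, S^h_{T,x_i}}, and the constant 2 cannot be improved. -/

import Mathlib

open MeasureTheory

noncomputable section SobolDefs

/-- Uniform probability measure on the open unit cube `(0,1)^n`. -/
def uCube (n : ℕ) : Measure (Fin n → ℝ) :=
  Measure.pi fun _ => volume.restrict (Set.Ioo 0 1)

/-- Mean value of `f`. -/
def mval {α : Type*} [MeasurableSpace α] (μ : Measure α) (f : α → ℝ) : ℝ := ∫ x, f x ∂μ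

/-- Integral of the square of `f`. -/
def intSq {α : Type*} [MeasurableSpace α] (μ : Measure α) (f : α → ℝ) : ℝ := ∫ x, (f x) ^ 2 ∂μ

/-- Variance of `f`. -/
def var' {α : Type*} [MeasurableSpace α] (μ : Measure α) (f : α → ℝ) : ℝ := intSq μ f - (mval μ f) ^ 2

/-- Covariance of `f` and `h`. -/
def cov' {α : Type*} [MeasurableSpace α] (μ : Measure α) (f h : α → ℝ) : ℝ :=
  (∫ x, f x * h x ∂μ) - mval μ f * mval μ h

/-- Conditional mean of `f` obtained by integrating out the coordinate encoded
by the update map `upd` over `(0,1)`. -/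
def cMean {α : Type*} [MeasurableSpace α] (upd : α → ℝ → α) (f : α → ℝ) (x : α) : ℝ :=
  ∫ t in Set.Ioo (0 : ℝ) 1, f (upd x t)

/-- Total-effect variance of the coordinate encoded by `upd`. -/
def tVar {α : Type*} [MeasurableSpace α] (μ : Measure α) (upd : α → ℝ → α) (f : α → ℝ) : ℝ :=
  intSq μ f - ∫ x, (cMean upd f x) ^ 2 ∂μ

/-- Total Sobol sensitivity index of the coordinate encoded by `upd`. -/
def sobolT {α : Type*} [MeasurableSpace α] (μ : Measure α) (upd : α → ℝ → α) (f : α → ℝ) : ℝ :=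
  tVar μ upd f / var' μ f

/-- Updating the `i`-th coordinate of a point of the cube. -/
def updC {n : ℕ} (i : Fin n) : (Fin n → ℝ) → ℝ → (Fin n → ℝ) :=
  fun x t => Function.update x i t

/-- Updating the `i`-th coordinate of the first component of a product point. -/
def updF {n : ℕ} {β : Type*} (i : Fin n) : ((Fin n → ℝ) × β) → ℝ → ((Fin n → ℝ) × β) :=
  fun p t => (Function.update p.1 i t, p.2)

end SobolDefs

/-!
Integrating out `x_i` turns the total-effect variance `T(F)` into the average, over the other
coordinates, of the variance of the one-dimensional slice `t ↦ F(x with x_i := t)`. Slice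
variances satisfy `Var(a + b) ≤ 2 Var a + 2 Var b`, hence `T(f + h) ≤ 2 T(f) + 2 T(h)`, while
`Cov(f, h) ≥ 0` gives `Var(f + h) ≥ Var f + Var h`; dividing yields the bound.

For sharpness take `f = x₁ + x₂` and `h = x₁ - x₂` on `(0,1)²`: they are uncorrelated and
`S_f = S_h = 1/2`, while `f + h = 2 x₁` depends on `x₁` alone, so `S_{f+h} = 1`.
-/

open ProbabilityTheory

theorem measurePreserving_update {ι : Type*} [Fintype ι] [DecidableEq ι] {α : ι → Type*}
    [∀ j, MeasurableSpace (α j)] (μ : ∀ j, Measure (α j)) [∀ j, IsProbabilityMeasure (μ j)]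
    (i : ι) :
    MeasurePreserving (fun p : (∀ j, α j) × α i => Function.update p.1 i p.2)
      ((Measure.pi μ).prod (μ i)) (Measure.pi μ) := by
  refine ⟨by fun_prop, (Measure.pi_eq fun s hs => ?_).symm⟩
  have hpre : (fun p : (∀ j, α j) × α i => Function.update p.1 i p.2) ⁻¹' Set.univ.pi s
      = Set.univ.pi (Function.update s i Set.univ) ×ˢ s i := by
    ext ⟨x, t⟩
    simp only [Set.mem_preimage, Set.mem_univ_pi, Set.mem_prod]
    constructor
    · intro h
      refine ⟨fun j => ?_, by simpa using h i⟩
      rcases eq_or_ne j i with rfl | hj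
      · simp
      · simpa [Function.update_of_ne hj] using h j
    · rintro ⟨h, ht⟩ j
      rcases eq_or_ne j i with rfl | hj
      · simpa using ht
      · simpa [Function.update_of_ne hj] using h j
  rw [Measure.map_apply (by fun_prop) (MeasurableSet.univ_pi hs), hpre, Measure.prod_prod,
    Measure.pi_pi, ← Finset.prod_erase_mul _ _ (Finset.mem_univ i),
    ← Finset.prod_erase_mul Finset.univ (fun j => μ j (s j)) (Finset.mem_univ i)]
  simp only [Function.update_self, measure_univ, mul_one]
  congr 1
  refine Finset.prod_congr rfl fun j hj => ?_
  rw [Function.update_of_ne (Finset.ne_of_mem_erase hj)]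

theorem variance_add_le_two_mul {Ω : Type*} [MeasurableSpace Ω] {μ : Measure Ω}
    [IsFiniteMeasure μ] {X Y : Ω → ℝ} (hX : MemLp X 2 μ) (hY : MemLp Y 2 μ) :
    Var[X + Y; μ] ≤ 2 * Var[X; μ] + 2 * Var[Y; μ] := by
  have hsub := variance_nonneg (X - Y) μ
  rw [variance_sub hX hY] at hsub
  rw [variance_add hX hY]
  linarith

section ProbabilitySpace

variable {Ω : Type*} [MeasurableSpace Ω] {μ : Measure Ω} [IsProbabilityMeasure μ]

theorem var'_eq_variance {f : Ω → ℝ} (hf : MemLp f 2 μ) : var' μ f = Var[f; μ] := by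
  rw [variance_eq_sub hf]; rfl

theorem cov'_eq_covariance {f h : Ω → ℝ} (hf : MemLp f 2 μ) (hh : MemLp h 2 μ) :
    cov' μ f h = cov[f, h; μ] := by
  rw [covariance_eq_sub hf hh]; rfl

theorem var'_add {f h : Ω → ℝ} (hf : MemLp f 2 μ) (hh : MemLp h 2 μ) :
    var' μ (f + h) = var' μ f + 2 * cov' μ f h + var' μ h := by
  rw [var'_eq_variance hf, var'_eq_variance hh, var'_eq_variance (hf.add hh),
    cov'_eq_covariance hf hh, variance_add hf hh]

end ProbabilitySpace

noncomputable def unifIoo : Measure ℝ := volume.restrict (Set.Ioo 0 1)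

instance : IsProbabilityMeasure unifIoo := ⟨by simp [unifIoo, Real.volume_Ioo]⟩

theorem uCube_eq_pi (n : ℕ) : uCube n = Measure.pi fun _ => unifIoo := rfl

instance (n : ℕ) : IsProbabilityMeasure (uCube n) := by
  rw [uCube_eq_pi]; infer_instance

section Slices

variable {n : ℕ} (i : Fin n) {F : (Fin n → ℝ) → ℝ}

theorem measurePreserving_updC :
    MeasurePreserving (fun p : (Fin n → ℝ) × ℝ => updC i p.1 p.2)
      ((uCube n).prod unifIoo) (uCube n) :=
  measurePreserving_update (fun _ => unifIoo) i

theorem cMean_eq_integral (x : Fin n → ℝ) :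
    cMean (updC i) F x = ∫ t, F (updC i x t) ∂unifIoo := rfl

variable (hF : MemLp F 2 (uCube n))
include hF

theorem memLp_comp_updC :
    MemLp (fun p : (Fin n → ℝ) × ℝ => F (updC i p.1 p.2)) 2 ((uCube n).prod unifIoo) :=
  hF.comp_measurePreserving (measurePreserving_updC i)

theorem ae_memLp_slice : ∀ᵐ x ∂(uCube n), MemLp (fun t => F (updC i x t)) 2 unifIoo := by
  have hG := memLp_comp_updC i hF
  filter_upwards [hG.aestronglyMeasurable.prodMk_left, hG.integrable_sq.prod_right_ae]
    with x hmeas hsq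
  exact (memLp_two_iff_integrable_sq hmeas).2 hsq

theorem intSq_eq_integral_slice :
    intSq (uCube n) F = ∫ x, ∫ t, F (updC i x t) ^ 2 ∂unifIoo ∂(uCube n) := by
  have hmp := measurePreserving_updC i
  have hsq : AEStronglyMeasurable (fun x => F x ^ 2) (uCube n) := hF.aestronglyMeasurable.pow 2
  rw [← hmp.map_eq] at hsq
  rw [intSq, ← hmp.map_eq, integral_map hmp.measurable.aemeasurable hsq, hmp.map_eq,
    integral_prod _ (memLp_comp_updC i hF).integrable_sq]

theorem integrable_cMean_sq : Integrable (fun x => cMean (updC i) F x ^ 2) (uCube n) := by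
  have hG := memLp_comp_updC i hF
  refine hG.integrable_sq.integral_prod_left.mono'
    (hG.aestronglyMeasurable.integral_prod_right'.pow 2) ?_
  filter_upwards [ae_memLp_slice i hF] with x hx
  have := variance_nonneg (fun t => F (updC i x t)) unifIoo
  rw [variance_eq_sub hx] at this
  rw [Real.norm_eq_abs, abs_of_nonneg (sq_nonneg _), cMean_eq_integral]
  simpa using this

theorem variance_slice_ae_eq :
    (fun x => Var[fun t => F (updC i x t); unifIoo]) =ᵐ[uCube n]
      fun x => ∫ t, F (updC i x t) ^ 2 ∂unifIoo - cMean (updC i) F x ^ 2 := by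
  filter_upwards [ae_memLp_slice i hF] with x hx
  rw [variance_eq_sub hx]; rfl

theorem integrable_variance_slice :
    Integrable (fun x => Var[fun t => F (updC i x t); unifIoo]) (uCube n) :=
  ((memLp_comp_updC i hF).integrable_sq.integral_prod_left.sub
    (integrable_cMean_sq i hF)).congr (variance_slice_ae_eq i hF).symm

theorem tVar_eq_integral_variance_slice :
    tVar (uCube n) (updC i) F = ∫ x, Var[fun t => F (updC i x t); unifIoo] ∂(uCube n) := by
  rw [tVar, intSq_eq_integral_slice i hF, integral_congr_ae (variance_slice_ae_eq i hF),
    integral_sub (memLp_comp_updC i hF).integrable_sq.integral_prod_left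
      (integrable_cMean_sq i hF)]

end Slices

section TotalVariance

variable {n : ℕ} (i : Fin n) {f h : (Fin n → ℝ) → ℝ}

theorem tVar_nonneg (hf : MemLp f 2 (uCube n)) : 0 ≤ tVar (uCube n) (updC i) f := by
  rw [tVar_eq_integral_variance_slice i hf]
  exact integral_nonneg fun x => variance_nonneg _ _

theorem tVar_add_le (hf : MemLp f 2 (uCube n)) (hh : MemLp h 2 (uCube n)) :
    tVar (uCube n) (updC i) (f + h)
      ≤ 2 * tVar (uCube n) (updC i) f + 2 * tVar (uCube n) (updC i) h := by
  rw [tVar_eq_integral_variance_slice i hf, tVar_eq_integral_variance_slice i hh,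
    tVar_eq_integral_variance_slice i (hf.add hh), ← integral_const_mul, ← integral_const_mul,
    ← integral_add ((integrable_variance_slice i hf).const_mul 2)
      ((integrable_variance_slice i hh).const_mul 2)]
  refine integral_mono_ae (integrable_variance_slice i (hf.add hh))
    (((integrable_variance_slice i hf).const_mul 2).add
      ((integrable_variance_slice i hh).const_mul 2)) ?_
  filter_upwards [ae_memLp_slice i hf, ae_memLp_slice i hh] with x hfx hhx
  exact variance_add_le_two_mul hfx hhx

end TotalVariance

theorem div_le_two_mul_max {Tf Th Tg Vf Vh Vg : ℝ} (hVf : 0 < Vf) (hVh : 0 < Vh)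
    (hV : Vf + Vh ≤ Vg) (hTf : 0 ≤ Tf) (hT : Tg ≤ 2 * Tf + 2 * Th) :
    Tg / Vg ≤ 2 * max (Tf / Vf) (Th / Vh) := by
  set M := max (Tf / Vf) (Th / Vh)
  have hM : 0 ≤ M := (div_nonneg hTf hVf.le).trans (le_max_left _ _)
  have hTfM : Tf ≤ M * Vf := (div_le_iff₀ hVf).1 (le_max_left _ _)
  have hThM : Th ≤ M * Vh := (div_le_iff₀ hVh).1 (le_max_right _ _)
  rw [div_le_iff₀ (by linarith)]
  nlinarith

theorem sobolT_add_le_two_mul_max {n : ℕ} (i : Fin n) {f h : (Fin n → ℝ) → ℝ}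
    (hf : MemLp f 2 (uCube n)) (hh : MemLp h 2 (uCube n))
    (hvf : 0 < var' (uCube n) f) (hvh : 0 < var' (uCube n) h)
    (hcov : 0 ≤ cov' (uCube n) f h) :
    sobolT (uCube n) (updC i) (f + h) ≤
      2 * max (sobolT (uCube n) (updC i) f) (sobolT (uCube n) (updC i) h) :=
  div_le_two_mul_max hvf hvh (by rw [var'_add hf hh]; linarith) (tVar_nonneg i hf)
    (tVar_add_le i hf hh)

theorem integral_unifIoo (g : ℝ → ℝ) : ∫ t, g t ∂unifIoo = ∫ t in (0 : ℝ)..1, g t := by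
  rw [intervalIntegral.integral_of_le zero_le_one, integral_Ioc_eq_integral_Ioo]; rfl

theorem memLp_id_unifIoo : MemLp id 2 unifIoo := by
  refine MemLp.of_bound aestronglyMeasurable_id 1 ?_
  filter_upwards [ae_restrict_mem measurableSet_Ioo] with t ht
  rw [id, Real.norm_eq_abs, abs_le]
  constructor <;> linarith [ht.1, ht.2]

theorem variance_id_unifIoo : Var[id; unifIoo] = 1 / 12 := by
  rw [variance_eq_sub memLp_id_unifIoo, integral_unifIoo, integral_unifIoo]
  simp only [Pi.pow_apply, id, integral_pow, integral_id]
  norm_num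

section DotProduct

variable {n : ℕ} (c d : Fin n → ℝ)

theorem memLp_dotProduct : MemLp (fun x => c ⬝ᵥ x) 2 (uCube n) :=
  memLp_finsetSum Finset.univ fun j _ =>
    (memLp_id_unifIoo.const_mul (c j)).comp_measurePreserving
      (measurePreserving_eval (fun _ => unifIoo) j)

theorem variance_dotProduct : Var[fun x => c ⬝ᵥ x; uCube n] = c ⬝ᵥ c / 12 := by
  have h := variance_sum_pi (μ := fun _ : Fin n => unifIoo) (X := fun j t => c j * id t)
    fun j => memLp_id_unifIoo.const_mul (c j)
  rw [Finset.sum_fn] at h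
  simp only [variance_const_mul, variance_id_unifIoo] at h
  rw [uCube_eq_pi]
  refine h.trans ?_
  rw [dotProduct, Finset.sum_div]
  exact Finset.sum_congr rfl fun j _ => by ring

theorem var'_dotProduct : var' (uCube n) (fun x => c ⬝ᵥ x) = c ⬝ᵥ c / 12 := by
  rw [var'_eq_variance (memLp_dotProduct c), variance_dotProduct]

theorem fun_dotProduct_add :
    (fun x => c ⬝ᵥ x) + (fun x => d ⬝ᵥ x) = fun x => (c + d) ⬝ᵥ x := by
  funext x; simp [add_dotProduct]

theorem cov'_dotProduct :
    cov' (uCube n) (fun x => c ⬝ᵥ x) (fun x => d ⬝ᵥ x) = c ⬝ᵥ d / 12 := by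
  have h := var'_add (memLp_dotProduct c) (memLp_dotProduct d)
  rw [fun_dotProduct_add, var'_dotProduct, var'_dotProduct, var'_dotProduct, add_dotProduct,
    dotProduct_add, dotProduct_add, dotProduct_comm d c] at h
  linarith

theorem dotProduct_updC (i : Fin n) (x : Fin n → ℝ) (t : ℝ) :
    c ⬝ᵥ updC i x t = c i * t + c ⬝ᵥ updC i x 0 := by
  have : updC i x t = Pi.single i t + updC i x 0 := by
    ext j; rcases eq_or_ne j i with rfl | hj <;> simp [updC, *]
  rw [this, dotProduct_add, dotProduct_single]

theorem tVar_dotProduct (i : Fin n) :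
    tVar (uCube n) (updC i) (fun x => c ⬝ᵥ x) = c i ^ 2 / 12 := by
  rw [tVar_eq_integral_variance_slice i (memLp_dotProduct c)]
  have hslice : ∀ x, (fun t => c ⬝ᵥ updC i x t) = fun t => c i * id t + c ⬝ᵥ updC i x 0 :=
    fun x => funext (dotProduct_updC c i x)
  simp only [hslice, variance_add_const (aestronglyMeasurable_id.const_mul _),
    variance_const_mul, variance_id_unifIoo, integral_const, probReal_univ, one_smul]
  ring

theorem sobolT_dotProduct (i : Fin n) (hc : c ≠ 0) :
    sobolT (uCube n) (updC i) (fun x => c ⬝ᵥ x) = c i ^ 2 / (c ⬝ᵥ c) := by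
  have hcc : c ⬝ᵥ c ≠ 0 := by simpa using hc
  rw [sobolT, tVar_dotProduct, var'_dotProduct]
  field_simp

end DotProduct

theorem exists_sobolT_add_eq_two_mul_max :
    ∃ f h : (Fin 2 → ℝ) → ℝ, MemLp f 2 (uCube 2) ∧ MemLp h 2 (uCube 2) ∧
      0 < var' (uCube 2) f ∧ 0 < var' (uCube 2) h ∧ 0 < var' (uCube 2) (f + h) ∧
      0 ≤ cov' (uCube 2) f h ∧
      sobolT (uCube 2) (updC 0) f = 1 / 2 ∧ sobolT (uCube 2) (updC 0) h = 1 / 2 ∧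
      sobolT (uCube 2) (updC 0) (f + h) = 1 := by
  refine ⟨fun x => ![1, 1] ⬝ᵥ x, fun x => ![1, -1] ⬝ᵥ x, memLp_dotProduct _,
    memLp_dotProduct _, ?_⟩
  rw [cov'_dotProduct, fun_dotProduct_add, var'_dotProduct, var'_dotProduct, var'_dotProduct,
    sobolT_dotProduct, sobolT_dotProduct, sobolT_dotProduct]
  all_goals norm_num [dotProduct, Fin.sum_univ_two]

/-- Case 4 (Theorem B1, simplified bound): if `Cov(f,h) ≥ 0` and `g = f + h`, then
`S^g_{T,x_i} ≤ 2·max{S^f_{T,x_i}, S^h_{T,x_i}}`, and the constant `2` is sharp. -/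
theorem stmt7 :
    (∀ (n : ℕ) (i : Fin n) (f h : (Fin n → ℝ) → ℝ),
      MemLp f 2 (uCube n) → MemLp h 2 (uCube n) →
      0 < var' (uCube n) f → 0 < var' (uCube n) h → 0 < var' (uCube n) (f + h) →
      0 ≤ cov' (uCube n) f h →
      sobolT (uCube n) (updC i) (f + h) ≤
        2 * max (sobolT (uCube n) (updC i) f) (sobolT (uCube n) (updC i) h)) ∧
    (∀ c : ℝ,
      (∀ (n : ℕ) (i : Fin n) (f h : (Fin n → ℝ) → ℝ),
        MemLp f 2 (uCube n) → MemLp h 2 (uCube n) →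
        0 < var' (uCube n) f → 0 < var' (uCube n) h → 0 < var' (uCube n) (f + h) →
        0 ≤ cov' (uCube n) f h →
        sobolT (uCube n) (updC i) (f + h) ≤
          2 * max (sobolT (uCube n) (updC i) f) (sobolT (uCube n) (updC i) h)) →
      (∀ (n : ℕ) (i : Fin n) (f h : (Fin n → ℝ) → ℝ),
        MemLp f 2 (uCube n) → MemLp h 2 (uCube n) →
        0 < var' (uCube n) f → 0 < var' (uCube n) h → 0 < var' (uCube n) (f + h) →
        0 ≤ cov' (uCube n) f h →
        sobolT (uCube n) (updC i) (f + h) ≤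
          c * max (sobolT (uCube n) (updC i) f) (sobolT (uCube n) (updC i) h)) →
      2 ≤ c) := by
  refine ⟨fun n i f h hf hh hvf hvh _ hcov => sobolT_add_le_two_mul_max i hf hh hvf hvh hcov,
    fun c _ hc => ?_⟩
  obtain ⟨f, h, hf, hh, hvf, hvh, hvg, hcov, hSf, hSh, hSg⟩ := exists_sobolT_add_eq_two_mul_max
  have hsharp := hc 2 0 f h hf hh hvf hvh hvg hcov
  rw [hSf, hSh, hSg, max_self] at hsharp
  linarith
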